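/- arXiv:1210.0616 — 8 statements merged into one kernel-verified Lean document; each statement's English description precedes it below -/
import Mathlib

section
/- Let X be a type and let S be a subset of X × X carrying an abelian group structure (S, +, 0) whose addition satisfies the complete-positivity condition: for all u, v ∈ S, the pair u + v (viewed in X × X) equals the swap of the pair v + u, i.e. if u + v = (e, f) then v + u = (f, e). Then every element of S has equal components: every (c, d) ∈ S satisfies c = d. -/
/-- If a subset `S ⊆ X × X` carries an abelian group structure whose addition is
completely positive, in the sense that `u + v` (viewed in `X × X`) is the swap of
`v + u`, then every element of `S` lies on the diagonal. -/
theorem stmt_0 {X : Type*} (S : Set (X × X)) [AddCommGroup S]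
    (hcp : ∀ u v : S, (↑(u + v) : X × X) = Prod.swap (↑(v + u) : X × X)) :
    ∀ c d : X, (c, d) ∈ S → c = d := by
  intro c d hcd
  -- Adding the neutral element on either side: `(c, d) = swap (c, d)`.
  have h_fixed := hcp ⟨(c, d), hcd⟩ 0
  rw [add_zero, zero_add] at h_fixed
  exact congrArg Prod.fst h_fixed
end

section
/- The linear map δ : M₂(ℂ) → M₄(ℂ) determined by sending each normalized Pauli matrix to its Kronecker square, δ(αᵢ) = αᵢ ⊗ₖ αᵢ for i = 1,2,3,4, is not a positive map: the matrix A = √2·α₁ + α₂ + α₄ = [[1 + 1/√2, 1/√2], [1/√2, 1 − 1/√2]] is positive semidefinite, but its image δ(A) = √2·(α₁ ⊗ₖ α₁) + (α₂ ⊗ₖ α₂) + (α₄ ⊗ₖ α₄) is not positive semidefinite (it has the negative eigenvalue (√2 − 2)/2). -/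
/-!
With `c = 1/√2` and `X`, `Z` the Pauli matrices, `A = √2·α₁ + α₂ + α₄` is `1 + c·X + c·Z`, and `(c, c)` is a unit vector,
so `A² = 2A`: `A` is twice a rank-one projection, hence positive semidefinite. Its image
`δ(A) = c·(1 ⊗ 1) + ½·(X ⊗ X) + ½·(Z ⊗ Z)` has the singlet `e₀ ⊗ e₁ - e₁ ⊗ e₀` as an eigenvector:
both `X ⊗ X` and `Z ⊗ Z` act on it by `-1`, so the eigenvalue is `c - 1 = (√2 - 2)/2 < 0`.
-/

open Matrix Kronecker ComplexOrder

noncomputable section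

section

variable {n 𝕜 : Type*} [Fintype n] [RCLike 𝕜]

theorem Matrix.IsHermitian.posSemidef_of_mul_self_eq_smul {A : Matrix n n 𝕜}
    (hA : A.IsHermitian) {r : 𝕜} (hr : 0 < r) (h : A * A = r • A) : A.PosSemidef := by
  have hA_eq : A = r⁻¹ • (Aᴴ * A) := by
    rw [hA.eq, h, smul_smul, inv_mul_cancel₀ hr.ne', one_smul]
  rw [hA_eq]
  exact (posSemidef_conjTranspose_mul_self A).smul (inv_nonneg.mpr hr.le)

theorem Matrix.not_posSemidef_of_mulVec_eq_smul {M : Matrix n n 𝕜} {x : n → 𝕜} (hx : x ≠ 0)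
    {μ : 𝕜} (hμ : μ < 0) (h : M *ᵥ x = μ • x) : ¬ M.PosSemidef := fun hM => by
  have hx_quad := hM.dotProduct_mulVec_nonneg x
  rw [h, dotProduct_smul, smul_eq_mul] at hx_quad
  exact (mul_neg_of_neg_of_pos hμ (dotProduct_star_self_pos_iff.mpr hx)).not_ge hx_quad

end

theorem isHermitian_one_add_bloch {a b : ℝ} :
    (!![1 + (b : ℂ), a; a, 1 - b]).IsHermitian := by
  ext i j
  fin_cases i <;> fin_cases j <;> simp [Complex.conj_ofReal]

theorem one_add_bloch_mul_self {a b : ℝ} (hab : a ^ 2 + b ^ 2 = 1) :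
    !![1 + (b : ℂ), a; a, 1 - b] * !![1 + (b : ℂ), a; a, 1 - b] =
      (2 : ℂ) • !![1 + (b : ℂ), a; a, 1 - b] := by
  have hab' : (a : ℂ) ^ 2 + (b : ℂ) ^ 2 = 1 := by exact_mod_cast hab
  ext i j
  fin_cases i <;> fin_cases j <;>
    simp only [Fin.zero_eta, Fin.mk_one, Fin.isValue, Matrix.mul_apply, of_apply, cons_val',
      cons_val_fin_one, cons_val_zero, cons_val_one, Fin.sum_univ_two, Matrix.smul_apply,
      smul_eq_mul]
  · linear_combination hab'
  · ring
  · ring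
  · linear_combination hab'

section

variable (R : Type*) [CommRing R]

def singlet : Fin 2 × Fin 2 → R := fun p => !![0, 1; -1, 0] p.1 p.2

theorem singlet_ne_zero [Nontrivial R] : singlet R ≠ 0 :=
  fun h => one_ne_zero (congrFun h (0, 1))

theorem pauliX_kronecker_pauliX_mulVec_singlet :
    (!![0, 1; 1, 0] ⊗ₖ !![0, 1; 1, 0] : Matrix (Fin 2 × Fin 2) (Fin 2 × Fin 2) R) *ᵥ singlet R =
      -singlet R := by
  ext ⟨i, j⟩
  fin_cases i <;> fin_cases j <;> simp [singlet, mulVec, dotProduct, Fintype.sum_prod_type]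

theorem pauliZ_kronecker_pauliZ_mulVec_singlet :
    (!![1, 0; 0, -1] ⊗ₖ !![1, 0; 0, -1] : Matrix (Fin 2 × Fin 2) (Fin 2 × Fin 2) R) *ᵥ
      singlet R = -singlet R := by
  ext ⟨i, j⟩
  fin_cases i <;> fin_cases j <;> simp [singlet, mulVec, dotProduct, Fintype.sum_prod_type]

theorem pauli_kronecker_combination_mulVec_singlet (a b d : R) :
    (a • (!![1, 0; 0, 1] ⊗ₖ !![1, 0; 0, 1]) + b • (!![0, 1; 1, 0] ⊗ₖ !![0, 1; 1, 0]) +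
        d • (!![1, 0; 0, -1] ⊗ₖ !![1, 0; 0, -1])) *ᵥ singlet R = (a - b - d) • singlet R := by
  rw [add_mulVec, add_mulVec, smul_mulVec, smul_mulVec, smul_mulVec, ← one_fin_two,
    one_kronecker_one, one_mulVec, pauliX_kronecker_pauliX_mulVec_singlet,
    pauliZ_kronecker_pauliZ_mulVec_singlet]
  module

end

theorem stmt_1_general
    (α₁ α₂ α₄ : Matrix (Fin 2) (Fin 2) ℂ)
    (h₁ : α₁ = ((Real.sqrt 2 : ℂ))⁻¹ • !![1, 0; 0, 1])
    (h₂ : α₂ = ((Real.sqrt 2 : ℂ))⁻¹ • !![0, 1; 1, 0])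
    (h₄ : α₄ = ((Real.sqrt 2 : ℂ))⁻¹ • !![1, 0; 0, -1])
    (δ : Matrix (Fin 2) (Fin 2) ℂ →ₗ[ℂ] Matrix (Fin 2 × Fin 2) (Fin 2 × Fin 2) ℂ)
    (hδ₁ : δ α₁ = α₁ ⊗ₖ α₁) (hδ₂ : δ α₂ = α₂ ⊗ₖ α₂)
    (hδ₄ : δ α₄ = α₄ ⊗ₖ α₄) :
    ((Real.sqrt 2 : ℂ) • α₁ + α₂ + α₄).PosSemidef ∧
      ¬ (δ ((Real.sqrt 2 : ℂ) • α₁ + α₂ + α₄)).PosSemidef := by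
  rw [map_add, map_add, map_smul, hδ₁, hδ₂, hδ₄]
  set c : ℝ := (Real.sqrt 2)⁻¹
  have hc : ((Real.sqrt 2 : ℂ))⁻¹ = c := by simp [c]
  have hc_sq : c ^ 2 = 1 / 2 := by simp [c, inv_pow]
  have hsqrt_mul : (Real.sqrt 2 : ℂ) * c = 1 := by rw [← hc]; exact mul_inv_cancel₀ (by simp)
  subst h₁ h₂ h₄
  rw [hc]
  refine ⟨?_, ?_⟩
  · have hA : (Real.sqrt 2 : ℂ) • ((c : ℂ) • !![1, 0; 0, 1]) + (c : ℂ) • !![0, 1; 1, 0] +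
        (c : ℂ) • !![1, 0; 0, -1] = !![1 + (c : ℂ), c; c, 1 - c] := by
      rw [smul_smul, hsqrt_mul, one_smul]
      ext i j
      fin_cases i <;> fin_cases j <;> simp [sub_eq_add_neg]
    rw [hA]
    exact isHermitian_one_add_bloch.posSemidef_of_mul_self_eq_smul two_pos
      (one_add_bloch_mul_self (by linarith))
  · have hcc : (c : ℂ) * c = 1 / 2 := by
      rw [← sq, ← Complex.ofReal_pow, hc_sq]; norm_num
    have hsqrt_lt : Real.sqrt 2 < 2 := by
      rw [Real.sqrt_lt' two_pos]; norm_num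
    simp only [smul_kronecker, kronecker_smul, smul_smul, hcc]
    refine not_posSemidef_of_mulVec_eq_smul (singlet_ne_zero ℂ) (μ := ((Real.sqrt 2 - 2) / 2 : ℝ))
      (by exact_mod_cast (by linarith : (Real.sqrt 2 - 2) / 2 < 0)) ?_
    rw [pauli_kronecker_combination_mulVec_singlet]
    push_cast
    congr 1
    ring

/-- The linear map `δ` on `M₂(ℂ)` sending each normalized Pauli matrix to its Kronecker
square is not a positive map: `A = √2·α₁ + α₂ + α₄` is positive semidefinite, but its
image `δ(A) = √2·(α₁ ⊗ₖ α₁) + (α₂ ⊗ₖ α₂) + (α₄ ⊗ₖ α₄)` is not. -/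
theorem stmt_1
    (α₁ α₂ α₃ α₄ : Matrix (Fin 2) (Fin 2) ℂ)
    (h₁ : α₁ = ((Real.sqrt 2 : ℂ))⁻¹ • !![1, 0; 0, 1])
    (h₂ : α₂ = ((Real.sqrt 2 : ℂ))⁻¹ • !![0, 1; 1, 0])
    (h₃ : α₃ = ((Real.sqrt 2 : ℂ))⁻¹ • !![0, -Complex.I; Complex.I, 0])
    (h₄ : α₄ = ((Real.sqrt 2 : ℂ))⁻¹ • !![1, 0; 0, -1])
    (δ : Matrix (Fin 2) (Fin 2) ℂ →ₗ[ℂ] Matrix (Fin 2 × Fin 2) (Fin 2 × Fin 2) ℂ)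
    (hδ₁ : δ α₁ = α₁ ⊗ₖ α₁) (hδ₂ : δ α₂ = α₂ ⊗ₖ α₂)
    (hδ₃ : δ α₃ = α₃ ⊗ₖ α₃) (hδ₄ : δ α₄ = α₄ ⊗ₖ α₄) :
    ((Real.sqrt 2 : ℂ) • α₁ + α₂ + α₄).PosSemidef ∧
      ¬ (δ ((Real.sqrt 2 : ℂ) • α₁ + α₂ + α₄)).PosSemidef :=
  stmt_1_general α₁ α₂ α₄ h₁ h₂ h₄ δ hδ₁ hδ₂ hδ₄
end
end

section
/- Fix n ≥ 1, let (α i)_{i : Fin (n*n)} be an orthonormal basis of Mₙ(ℂ) for the Hilbert–Schmidt inner product, and let δ : Mₙ(ℂ) → M_{n·n}(ℂ) be the unique linear map with δ(α i) = (α i) ⊗ₖ (α i). Then δ is completely positive if and only if the matrix Δ, indexed by triples (j'', j', j) and (k'', k', k) in Fin n × Fin n × Fin n, with entries Δ_{(j'',j',j),(k'',k',k)} = ∑_i conj((α i)_{j k}) · (α i)_{j' k'} · (α i)_{j'' k''}, is positive semidefinite. -/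
/-!
A linear map `Φ : Mₚ → M_q` is completely positive iff its Choi matrix `[Φ (E_jk)]_{j,k}` is
positive semidefinite. The Choi matrix is, up to reindexing, the amplification of `Φ` at the
rank-one positive matrix `∑ E_jk ⊗ E_jk`; conversely the amplification of `Φ` at `M` is the
compression `Vᴴ (M ⊗ C_Φ) V` of the Kronecker product of `M` with the Choi matrix `C_Φ`, where
`V` picks out the entries `((a, j), (j, s))`.

Expanding `E_jk` in the orthonormal basis gives `δ (E_jk) = ∑ᵢ conj (αᵢ j k) • αᵢ ⊗ αᵢ`, so the
Choi matrix of `δ` is `Δ` with the index triples reversed.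
-/

open Matrix Kronecker ComplexOrder

noncomputable section

/-- The Hilbert-Schmidt inner product `⟨a, b⟩ = Tr(aᴴ b)` on square matrices. -/
def hsInner {m : Type*} [Fintype m] (a b : Matrix m m ℂ) : ℂ :=
  (aᴴ * b).trace

/-- The amplification `id ⊗ Φ` of a linear map `Φ` between matrix algebras,
acting blockwise on matrices indexed by `Fin k × p`. -/
def amplify {p q : Type*} [Fintype p] [Fintype q]
    (Φ : Matrix p p ℂ →ₗ[ℂ] Matrix q q ℂ) (k : ℕ)
    (M : Matrix (Fin k × p) (Fin k × p) ℂ) :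
    Matrix (Fin k × q) (Fin k × q) ℂ :=
  Matrix.of fun i j => Φ (Matrix.of fun a b => M (i.1, a) (j.1, b)) i.2 j.2

/-- A linear map between matrix algebras is completely positive if all its
amplifications send positive semidefinite matrices to positive semidefinite matrices. -/
def IsCompletelyPositive {p q : Type*} [Fintype p] [Fintype q]
    (Φ : Matrix p p ℂ →ₗ[ℂ] Matrix q q ℂ) : Prop :=
  ∀ (k : ℕ) (M : Matrix (Fin k × p) (Fin k × p) ℂ),
    M.PosSemidef → (amplify Φ k M).PosSemidef

section Choi

variable {p q : Type*} [Fintype p] [DecidableEq p]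

def choiMatrix (Φ : Matrix p p ℂ →ₗ[ℂ] Matrix q q ℂ) : Matrix (p × q) (p × q) ℂ :=
  of fun x y => Φ (single x.1 y.1 1) x.2 y.2

lemma apply_eq_sum_mul_choiMatrix (Φ : Matrix p p ℂ →ₗ[ℂ] Matrix q q ℂ)
    (A : Matrix p p ℂ) (s t : q) :
    Φ A s t = ∑ j, ∑ k, A j k * choiMatrix Φ (j, s) (k, t) := by
  conv_lhs => rw [matrix_eq_sum_single A]
  have (j k : p) : single j k (A j k) = A j k • single j k 1 := by
    rw [smul_single, smul_eq_mul, mul_one]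
  simp only [this, map_sum, map_smul, Matrix.sum_apply, Matrix.smul_apply, smul_eq_mul,
    choiMatrix, of_apply]

variable [Fintype q]

lemma amplify_eq_conjTranspose_mul_kronecker_mul [DecidableEq q]
    (Φ : Matrix p p ℂ →ₗ[ℂ] Matrix q q ℂ) (k : ℕ) (M : Matrix (Fin k × p) (Fin k × p) ℂ) :
    let V : Matrix ((Fin k × p) × (p × q)) (Fin k × q) ℂ :=
      of fun x y => if x.1.1 = y.1 ∧ x.1.2 = x.2.1 ∧ x.2.2 = y.2 then 1 else 0
    amplify Φ k M = Vᴴ * (M ⊗ₖ choiMatrix Φ) * V := by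
  intro V
  ext ⟨a, s⟩ ⟨b, t⟩
  rw [amplify, of_apply, apply_eq_sum_mul_choiMatrix, Finset.sum_comm]
  simp [V, mul_apply, Fintype.sum_prod_type, ite_and, apply_ite (starRingEnd ℂ)]

lemma choiMatrix_eq_submatrix_amplify (Φ : Matrix p p ℂ →ₗ[ℂ] Matrix q q ℂ) :
    let e := Fintype.equivFin p
    let w : Matrix (Fin (Fintype.card p) × p) Unit ℂ :=
      of fun x _ => if e.symm x.1 = x.2 then 1 else 0
    choiMatrix Φ = (amplify Φ _ (w * wᴴ)).submatrix (Prod.map e id) (Prod.map e id) := by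
  intro e w
  ext ⟨j, s⟩ ⟨k, t⟩
  have : (of fun a b => (w * wᴴ) (e j, a) (e k, b)) = single j k 1 := by
    ext a b
    simp [w, mul_apply, single_apply, ← ite_and, and_comm]
  simp [choiMatrix, amplify, this]

theorem isCompletelyPositive_iff_posSemidef_choiMatrix (Φ : Matrix p p ℂ →ₗ[ℂ] Matrix q q ℂ) :
    IsCompletelyPositive Φ ↔ (choiMatrix Φ).PosSemidef := by
  classical
  refine ⟨fun hΦ => ?_, fun hC k M hM => ?_⟩
  · rw [choiMatrix_eq_submatrix_amplify]
    exact (hΦ _ _ (posSemidef_self_mul_conjTranspose _)).submatrix _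
  · rw [amplify_eq_conjTranspose_mul_kronecker_mul]
    exact (hM.kronecker hC).conjTranspose_mul_mul_same _

end Choi

section Orthonormal

variable {ι m : Type*} [Fintype ι] [DecidableEq ι] [Fintype m]

lemma hsInner_single [DecidableEq m] (a : Matrix m m ℂ) (j k : m) :
    hsInner a (single j k 1) = star (a j k) := by
  simp [hsInner, trace, mul_apply, single_apply, ite_and]

lemma hsInner_add_right (a b c : Matrix m m ℂ) :
    hsInner a (b + c) = hsInner a b + hsInner a c := by
  simp [hsInner, Matrix.mul_add, trace_add]

lemma hsInner_smul_right (a b : Matrix m m ℂ) (c : ℂ) : hsInner a (c • b) = c * hsInner a b := by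
  simp [hsInner, trace_smul]

lemma eq_sum_hsInner_smul_of_orthonormal (α : ι → Matrix m m ℂ)
    (horth : ∀ i j, hsInner (α i) (α j) = if i = j then 1 else 0)
    (hspan : Submodule.span ℂ (Set.range α) = ⊤) (A : Matrix m m ℂ) :
    A = ∑ i, hsInner (α i) A • α i := by
  have hA : A ∈ Submodule.span ℂ (Set.range α) := hspan ▸ Submodule.mem_top
  induction hA using Submodule.span_induction with
  | mem x hx =>
    obtain ⟨j, rfl⟩ := hx
    simp [horth]
  | zero => simp [hsInner]
  | add x y _ _ hx hy =>
    conv_lhs => rw [hx, hy]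
    simp [hsInner_add_right, add_smul, Finset.sum_add_distrib]
  | smul c x _ hx =>
    conv_lhs => rw [hx]
    simp [hsInner_smul_right, Finset.smul_sum, mul_smul]

lemma choiMatrix_eq_of_orthonormal [DecidableEq m] (α : ι → Matrix m m ℂ)
    (horth : ∀ i j, hsInner (α i) (α j) = if i = j then 1 else 0)
    (hspan : Submodule.span ℂ (Set.range α) = ⊤)
    (δ : Matrix m m ℂ →ₗ[ℂ] Matrix (m × m) (m × m) ℂ) (hδ : ∀ i, δ (α i) = α i ⊗ₖ α i) :
    choiMatrix δ =
      of fun x y => ∑ i, star (α i x.1 y.1) * α i x.2.1 y.2.1 * α i x.2.2 y.2.2 := by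
  ext ⟨j, s⟩ ⟨k, t⟩
  rw [choiMatrix, of_apply, eq_sum_hsInner_smul_of_orthonormal α horth hspan (single j k 1)]
  simp [hδ, hsInner_single, Matrix.sum_apply, mul_assoc]

end Orthonormal

theorem stmt_2_general (n : ℕ)
    (α : Fin (n * n) → Matrix (Fin n) (Fin n) ℂ)
    (horth : ∀ i j, hsInner (α i) (α j) = if i = j then 1 else 0)
    (hspan : Submodule.span ℂ (Set.range α) = ⊤)
    (δ : Matrix (Fin n) (Fin n) ℂ →ₗ[ℂ] Matrix (Fin n × Fin n) (Fin n × Fin n) ℂ)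
    (hδ : ∀ i, δ (α i) = α i ⊗ₖ α i) :
    IsCompletelyPositive δ ↔
      (Matrix.of fun (j k : Fin n × Fin n × Fin n) =>
        ∑ i, (starRingEnd ℂ) (α i j.2.2 k.2.2) * α i j.2.1 k.2.1 * α i j.1 k.1).PosSemidef := by
  let reverse : Fin n × Fin n × Fin n ≃ Fin n × Fin n × Fin n :=
    ⟨fun x => (x.2.2, x.2.1, x.1), fun x => (x.2.2, x.2.1, x.1), fun _ => rfl, fun _ => rfl⟩
  rw [isCompletelyPositive_iff_posSemidef_choiMatrix,
    choiMatrix_eq_of_orthonormal α horth hspan δ hδ, ← posSemidef_submatrix_equiv reverse]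
  rfl

/-- Choi-type characterization: `δ` (the map `α i ↦ α i ⊗ₖ α i` on an orthonormal
basis of `Mₙ(ℂ)`) is completely positive iff the matrix `Δ` is positive semidefinite. -/
theorem stmt_2 (n : ℕ) (hn : 1 ≤ n)
    (α : Fin (n * n) → Matrix (Fin n) (Fin n) ℂ)
    (horth : ∀ i j, hsInner (α i) (α j) = if i = j then 1 else 0)
    (hspan : Submodule.span ℂ (Set.range α) = ⊤)
    (δ : Matrix (Fin n) (Fin n) ℂ →ₗ[ℂ] Matrix (Fin n × Fin n) (Fin n × Fin n) ℂ)
    (hδ : ∀ i, δ (α i) = α i ⊗ₖ α i) :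
    IsCompletelyPositive δ ↔
      (Matrix.of fun (j k : Fin n × Fin n × Fin n) =>
        ∑ i, (starRingEnd ℂ) (α i j.2.2 k.2.2) * α i j.2.1 k.2.1 * α i j.1 k.1).PosSemidef :=
  stmt_2_general n α horth hspan δ hδ
end
end

section
/- Fix n ≥ 1, let (α i)_{i : Fin (n*n)} be an orthonormal basis of Mₙ(ℂ) for the Hilbert–Schmidt inner product, and let δ : Mₙ(ℂ) → M_{n·n}(ℂ) be the unique linear map with δ(α i) = (α i) ⊗ₖ (α i). If δ is completely positive, then the set of basis elements is closed under conjugate transpose: {α i : i} = {(α i)ᴴ : i} as sets of matrices. -/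
/-!
Complete positivity makes `δ` hermiticity-preserving: amplifying `δ` by `k = 2` and applying it
to the positive rank-one matrix built from the vector `(x, y)` shows `δ (x yᴴ)ᴴ = (δ (x yᴴ))ᴴ`.
Hence `δ (α iᴴ) = α iᴴ ⊗ₖ α iᴴ`. Writing `α iᴴ = ∑ c j • α j`, the two expansions of
`δ (α iᴴ)` in the orthonormal family `α j ⊗ₖ α k` give `c j * c k = if j = k then c j else 0`,
and since `α iᴴ ≠ 0` this forces `c` to be a standard basis vector, i.e. `α iᴴ = α j`.
-/

open Matrix Kronecker ComplexOrder

noncomputable section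

def IsHSOrthonormal {m ι : Type*} [Fintype m] [DecidableEq ι] (α : ι → Matrix m m ℂ) : Prop :=
  ∀ i j, hsInner (α i) (α j) = if i = j then 1 else 0

section HilbertSchmidt

variable {m ι : Type*} [Fintype m]

def hsInnerₗ (a : Matrix m m ℂ) : Matrix m m ℂ →ₗ[ℂ] ℂ :=
  (traceLinearMap m ℂ ℂ).comp (LinearMap.mulLeft ℂ aᴴ)

@[simp]
lemma hsInnerₗ_apply (a b : Matrix m m ℂ) : hsInnerₗ a b = hsInner a b := rfl

lemma hsInner_kronecker {m' : Type*} [Fintype m'] (a b : Matrix m m ℂ) (c d : Matrix m' m' ℂ) :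
    hsInner (a ⊗ₖ c) (b ⊗ₖ d) = hsInner a b * hsInner c d := by
  rw [hsInner, conjTranspose_kronecker, ← mul_kronecker_mul, trace_kronecker, hsInner, hsInner]

variable [DecidableEq ι] {α : ι → Matrix m m ℂ}

lemma IsHSOrthonormal.linearIndependent [Fintype ι] (hα : IsHSOrthonormal α) :
    LinearIndependent ℂ α := by
  refine Fintype.linearIndependent_iff.mpr fun g hg i => ?_
  have h := congrArg (hsInnerₗ (α i)) hg
  rw [map_sum, map_zero] at h
  simpa [hα i] using h

lemma IsHSOrthonormal.kronecker (hα : IsHSOrthonormal α) :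
    IsHSOrthonormal fun p : ι × ι => α p.1 ⊗ₖ α p.2 := by
  intro p q
  rw [hsInner_kronecker, hα, hα, ite_zero_mul_ite_zero, one_mul]
  simp only [Prod.ext_iff]

end HilbertSchmidt

lemma exists_eq_pi_single_of_mul_eq_ite {ι R : Type*} [DecidableEq ι] [CommRing R] [IsDomain R]
    {c : ι → R} (hc : c ≠ 0) (h : ∀ j k, c j * c k = if j = k then c j else 0) :
    ∃ j, c = Pi.single j 1 := by
  obtain ⟨j, hj⟩ := Function.ne_iff.mp hc
  refine ⟨j, funext fun k => ?_⟩
  rcases eq_or_ne k j with rfl | hkj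
  · rw [Pi.single_eq_same]
    exact mul_left_cancel₀ hj (by simpa using h k k)
  · rw [Pi.single_eq_of_ne hkj]
    exact (mul_eq_zero.mp ((h j k).trans (if_neg hkj.symm))).resolve_left hj

section CompletelyPositive

variable {p q : Type*} [Fintype p] [Fintype q] {Φ : Matrix p p ℂ →ₗ[ℂ] Matrix q q ℂ}

lemma IsCompletelyPositive.map_conjTranspose_vecMulVec (hΦ : IsCompletelyPositive Φ)
    (x y : p → ℂ) : Φ (vecMulVec x (star y))ᴴ = (Φ (vecMulVec x (star y)))ᴴ := by
  let w : Fin 2 × p → ℂ := fun r => ![x, y] r.1 r.2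
  have hsymm := (hΦ 2 _ (posSemidef_vecMulVec_self_star w)).isHermitian
  rw [conjTranspose_vecMulVec, star_star]
  ext a b
  simpa [amplify, vecMulVec, w] using (congrFun (congrFun hsymm (1, a)) (0, b)).symm

lemma IsCompletelyPositive.map_conjTranspose [DecidableEq p] (hΦ : IsCompletelyPositive Φ)
    (a : Matrix p p ℂ) : Φ aᴴ = (Φ a)ᴴ := by
  induction a using Matrix.induction_on' with
  | h_zero => simp
  | h_add a b ha hb => rw [conjTranspose_add, map_add, map_add, conjTranspose_add, ha, hb]
  | h_std_basis i j c =>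
    have hsingle : single i j c = vecMulVec (Pi.single i c) (star (Pi.single j 1)) := by
      ext k l
      by_cases hk : i = k <;> by_cases hl : j = l <;>
        simp [single, vecMulVec, Pi.single_apply, hk, hl, eq_comm]
    rw [hsingle]
    exact hΦ.map_conjTranspose_vecMulVec _ _

end CompletelyPositive

lemma sum_smul_kronecker_sum_smul {ι l m n o : Type*} [Fintype ι] (c d : ι → ℂ)
    (a : ι → Matrix l m ℂ) (b : ι → Matrix n o ℂ) :
    (∑ j, c j • a j) ⊗ₖ (∑ k, d k • b k) = ∑ r : ι × ι, (c r.1 * d r.2) • (a r.1 ⊗ₖ b r.2) := by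
  ext ⟨i, i'⟩ ⟨j, j'⟩
  simp [Matrix.sum_apply, Finset.sum_mul_sum, Fintype.sum_prod_type, mul_mul_mul_comm]

section KroneckerDiagonal

variable {m ι : Type*} [Fintype m] [Fintype ι] [DecidableEq ι] {α : ι → Matrix m m ℂ}
  {c : ι → ℂ}

lemma IsHSOrthonormal.mul_eq_ite_of_sum_kronecker_self (hα : IsHSOrthonormal α)
    (h : ∑ j, c j • (α j ⊗ₖ α j) = (∑ j, c j • α j) ⊗ₖ (∑ j, c j • α j)) (j k : ι) :
    c j * c k = if j = k then c j else 0 := by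
  refine Fintype.linearIndependent_iffₛ.mp hα.kronecker.linearIndependent
    (fun r => c r.1 * c r.2) (fun r => if r.1 = r.2 then c r.1 else 0) ?_ (j, k)
  rw [← sum_smul_kronecker_sum_smul, ← h, Fintype.sum_prod_type]
  simp [ite_smul]

lemma IsHSOrthonormal.exists_eq_of_sum_kronecker_self (hα : IsHSOrthonormal α) (hc : c ≠ 0)
    (h : ∑ j, c j • (α j ⊗ₖ α j) = (∑ j, c j • α j) ⊗ₖ (∑ j, c j • α j)) :
    ∃ j, ∑ k, c k • α k = α j := by
  obtain ⟨j, rfl⟩ := exists_eq_pi_single_of_mul_eq_ite hc (hα.mul_eq_ite_of_sum_kronecker_self h)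
  exact ⟨j, by simp [Pi.single_apply]⟩

end KroneckerDiagonal

lemma IsHSOrthonormal.exists_conjTranspose_eq {m ι : Type*} [Fintype m] [DecidableEq m]
    [Fintype ι] [DecidableEq ι] {α : ι → Matrix m m ℂ} (hα : IsHSOrthonormal α)
    (hspan : Submodule.span ℂ (Set.range α) = ⊤)
    {δ : Matrix m m ℂ →ₗ[ℂ] Matrix (m × m) (m × m) ℂ} (hδ : ∀ i, δ (α i) = α i ⊗ₖ α i)
    (hCP : IsCompletelyPositive δ) (i : ι) : ∃ j, (α i)ᴴ = α j := by
  have hmem : (α i)ᴴ ∈ Submodule.span ℂ (Set.range α) := hspan ▸ Submodule.mem_top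
  obtain ⟨c, hc⟩ := (Submodule.mem_span_range_iff_exists_fun ℂ).mp hmem
  have hc0 : c ≠ 0 := by
    rintro rfl
    have hαi : α i = 0 := by simpa [eq_comm] using hc
    simpa [hαi, hsInner] using hα i i
  obtain ⟨j, hj⟩ := hα.exists_eq_of_sum_kronecker_self hc0 <| by
    calc ∑ j, c j • (α j ⊗ₖ α j) = δ (α i)ᴴ := by simp [← hc, map_sum, hδ]
      _ = _ := by rw [hCP.map_conjTranspose, hδ, conjTranspose_kronecker, hc]
  exact ⟨j, hc ▸ hj⟩

theorem stmt_4_general (n : ℕ)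
    (α : Fin (n * n) → Matrix (Fin n) (Fin n) ℂ)
    (horth : ∀ i j, hsInner (α i) (α j) = if i = j then 1 else 0)
    (hspan : Submodule.span ℂ (Set.range α) = ⊤)
    (δ : Matrix (Fin n) (Fin n) ℂ →ₗ[ℂ] Matrix (Fin n × Fin n) (Fin n × Fin n) ℂ)
    (hδ : ∀ i, δ (α i) = α i ⊗ₖ α i)
    (hCP : IsCompletelyPositive δ) :
    Set.range α = Set.range fun i => (α i)ᴴ := by
  have hstar : ∀ i, ∃ j, (α i)ᴴ = α j :=
    IsHSOrthonormal.exists_conjTranspose_eq horth hspan hδ hCP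
  ext x
  constructor
  · rintro ⟨i, rfl⟩
    obtain ⟨j, hj⟩ := hstar i
    exact ⟨j, by simp [← hj]⟩
  · rintro ⟨i, rfl⟩
    obtain ⟨j, hj⟩ := hstar i
    exact ⟨j, hj.symm⟩

/-- If δ is completely positive then the orthonormal basis is closed under
conjugate transpose. -/
theorem stmt_4 (n : ℕ) (hn : 1 ≤ n)
    (α : Fin (n * n) → Matrix (Fin n) (Fin n) ℂ)
    (horth : ∀ i j, hsInner (α i) (α j) = if i = j then 1 else 0)
    (hspan : Submodule.span ℂ (Set.range α) = ⊤)
    (δ : Matrix (Fin n) (Fin n) ℂ →ₗ[ℂ] Matrix (Fin n × Fin n) (Fin n × Fin n) ℂ)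
    (hδ : ∀ i, δ (α i) = α i ⊗ₖ α i)
    (hCP : IsCompletelyPositive δ) :
    Set.range α = Set.range fun i => (α i)ᴴ :=
  stmt_4_general n α horth hspan δ hδ hCP
end
end

section
/- Fix n ≥ 1, let (α i)_{i : Fin (n*n)} be an orthonormal basis of Mₙ(ℂ) for the Hilbert–Schmidt inner product, and let δ : Mₙ(ℂ) → M_{n·n}(ℂ) be the unique linear map with δ(α i) = (α i) ⊗ₖ (α i). If δ is completely positive, then any two positive semidefinite basis elements commute: if α i and α j are both positive semidefinite, then (α i)·(α j) = (α j)·(α i). -/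
/-!
Distinct elements of an orthonormal family are Hilbert–Schmidt orthogonal, and two positive
semidefinite matrices `XᴴX`, `YᴴY` with `Tr(XᴴX YᴴY) = ‖Y Xᴴ‖² = 0` have product
`Xᴴ (Y Xᴴ)ᴴ Y = 0`; being Hermitian, they then also satisfy `YᴴY XᴴX = 0`, so they commute.
-/

open Matrix Kronecker ComplexOrder

noncomputable section

namespace Matrix

open scoped MatrixOrder

variable {n 𝕜 : Type*} [Fintype n] [RCLike 𝕜] {A B : Matrix n n 𝕜}

theorem PosSemidef.mul_eq_zero_of_trace_mul_eq_zero (hA : A.PosSemidef) (hB : B.PosSemidef)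
    (h : (A * B).trace = 0) : A * B = 0 := by
  classical
  obtain ⟨X, rfl⟩ := CStarAlgebra.nonneg_iff_eq_star_mul_self.mp hA.nonneg
  obtain ⟨Y, rfl⟩ := CStarAlgebra.nonneg_iff_eq_star_mul_self.mp hB.nonneg
  simp only [star_eq_conjTranspose] at h ⊢
  have hYX : Y * Xᴴ = 0 := by
    rw [← trace_conjTranspose_mul_self_eq_zero_iff, ← h]
    calc ((Y * Xᴴ)ᴴ * (Y * Xᴴ)).trace = (X * Yᴴ * Y * Xᴴ).trace := by
          simp only [conjTranspose_mul, conjTranspose_conjTranspose, Matrix.mul_assoc]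
      _ = (Xᴴ * X * (Yᴴ * Y)).trace := by
          rw [trace_mul_comm]; simp only [Matrix.mul_assoc]
  calc Xᴴ * X * (Yᴴ * Y) = Xᴴ * (Y * Xᴴ)ᴴ * Y := by
        simp only [conjTranspose_mul, conjTranspose_conjTranspose, Matrix.mul_assoc]
    _ = 0 := by rw [hYX]; simp

theorem PosSemidef.commute_of_trace_mul_eq_zero (hA : A.PosSemidef) (hB : B.PosSemidef)
    (h : (A * B).trace = 0) : Commute A B := by
  have hAB := hA.mul_eq_zero_of_trace_mul_eq_zero hB h
  have hBA : B * A = 0 := by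
    rw [← hB.1.eq, ← hA.1.eq, ← conjTranspose_mul, hAB, conjTranspose_zero]
  exact hAB.trans hBA.symm

end Matrix

theorem stmt_7_general (n : ℕ)
    (α : Fin (n * n) → Matrix (Fin n) (Fin n) ℂ)
    (horth : ∀ i j, hsInner (α i) (α j) = if i = j then 1 else 0) :
    ∀ i j, (α i).PosSemidef → (α j).PosSemidef → α i * α j = α j * α i := by
  intro i j hi hj
  obtain rfl | hij := eq_or_ne i j
  · rfl
  refine hi.commute_of_trace_mul_eq_zero hj ?_
  simpa [hsInner, hi.1.eq, hij] using horth i j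

/-- If δ is completely positive then positive semidefinite basis elements commute
pairwise. -/
theorem stmt_7 (n : ℕ) (hn : 1 ≤ n)
    (α : Fin (n * n) → Matrix (Fin n) (Fin n) ℂ)
    (horth : ∀ i j, hsInner (α i) (α j) = if i = j then 1 else 0)
    (hspan : Submodule.span ℂ (Set.range α) = ⊤)
    (δ : Matrix (Fin n) (Fin n) ℂ →ₗ[ℂ] Matrix (Fin n × Fin n) (Fin n × Fin n) ℂ)
    (hδ : ∀ i, δ (α i) = α i ⊗ₖ α i)
    (hCP : IsCompletelyPositive δ) :
    ∀ i j, (α i).PosSemidef → (α j).PosSemidef → α i * α j = α j * α i :=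
  stmt_7_general n α horth
end
end

section
/- Let Φ : Mₙ(ℂ) → Mₘ(ℂ) be a completely positive, trace-preserving linear map that is an isometry for the Hilbert–Schmidt inner product (⟨Φ(a), Φ(b)⟩ = ⟨a, b⟩ for all a, b). Then Φ preserves pure states: for every unit vector ψ ∈ ℂⁿ there is a unit vector φ ∈ ℂᵐ with Φ(ψψᴴ) = φφᴴ. -/
/-!
For a unit vector `ψ`, the state `P = ψψᴴ` is positive with `Tr P = Tr P² = 1`. Positivity of `Φ`
(complete positivity at level one), trace preservation and the isometry property transfer these
three facts to `Q = Φ P`. The eigenvalues of `Q` are then nonnegative reals with `∑ λᵢ = ∑ λᵢ² = 1`,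
which forces one of them to be `1` and the others `0`; so `Q` is the projection onto a unit
eigenvector.
-/

open Matrix Kronecker ComplexOrder

noncomputable section

lemma IsCompletelyPositive.posSemidef_map {p q : Type*} [Fintype p] [Fintype q]
    {Φ : Matrix p p ℂ →ₗ[ℂ] Matrix q q ℂ} (hΦ : IsCompletelyPositive Φ)
    {A : Matrix p p ℂ} (hA : A.PosSemidef) : (Φ A).PosSemidef :=
  (hΦ 1 (A.submatrix Prod.snd Prod.snd) (hA.submatrix _)).submatrix fun i => ((0 : Fin 1), i)

lemma exists_eq_single_of_sum_eq_one_of_sum_sq_eq_one {ι : Type*} [Fintype ι] [DecidableEq ι]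
    {x : ι → ℝ} (hx : ∀ i, 0 ≤ x i) (hsum : ∑ i, x i = 1) (hsq : ∑ i, x i ^ 2 = 1) :
    ∃ j, x = Pi.single j 1 := by
  have hle (i : ι) : x i ≤ 1 := hsum ▸ Finset.single_le_sum (fun i _ => hx i) (Finset.mem_univ i)
  -- `x i - x i ^ 2 ≥ 0` sums to `0`, so every `x i` is `0` or `1`.
  have hidem (i : ι) : x i ^ 2 = x i := by
    have hsub : ∑ i, (x i - x i ^ 2) = 0 := by rw [Finset.sum_sub_distrib, hsum, hsq, sub_self]
    have := (Finset.sum_eq_zero_iff_of_nonneg fun i _ => by nlinarith [hx i, hle i]).mp hsub i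
      (Finset.mem_univ i)
    linarith
  obtain ⟨j, -, hj⟩ := Finset.exists_ne_zero_of_sum_ne_zero (hsum ▸ one_ne_zero : ∑ i, x i ≠ 0)
  have hj1 : x j = 1 := by
    have := hidem j
    rw [sq] at this
    exact mul_left_cancel₀ hj (this.trans (mul_one _).symm)
  have hrest : ∑ i ∈ Finset.univ.erase j, x i = 0 := by
    linarith [Finset.add_sum_erase Finset.univ x (Finset.mem_univ j)]
  refine ⟨j, funext fun i => ?_⟩
  rcases eq_or_ne i j with rfl | hij
  · simp [hj1]
  · rw [Pi.single_eq_of_ne hij]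
    exact (Finset.sum_eq_zero_iff_of_nonneg fun i _ => hx i).mp hrest i
      (Finset.mem_erase.mpr ⟨hij, Finset.mem_univ i⟩)

lemma Matrix.trace_unitary_mul_mul_star {n α : Type*} [Fintype n] [DecidableEq n] [CommRing α]
    [StarRing α] (U : unitaryGroup n α) (M : Matrix n n α) :
    ((U : Matrix n n α) * M * star (U : Matrix n n α)).trace = M.trace := by
  rw [trace_mul_comm, ← Matrix.mul_assoc, Unitary.coe_star_mul_self, Matrix.one_mul]

lemma Matrix.PosSemidef.exists_eq_vecMulVec_of_trace_eq_one {n 𝕜 : Type*} [Fintype n]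
    [DecidableEq n] [RCLike 𝕜] {Q : Matrix n n 𝕜} (hQ : Q.PosSemidef) (htr : Q.trace = 1)
    (htr_sq : (Q * Q).trace = 1) :
    ∃ φ : n → 𝕜, star φ ⬝ᵥ φ = 1 ∧ Q = vecMulVec φ (star φ) := by
  have hspec := hQ.1.spectral_theorem
  have hsum : ∑ i, hQ.1.eigenvalues i = 1 := by
    exact_mod_cast hQ.1.trace_eq_sum_eigenvalues ▸ htr
  have hsq : ∑ i, hQ.1.eigenvalues i ^ 2 = 1 := by
    rw [hspec, ← map_mul, Unitary.conjStarAlgAut_apply, trace_unitary_mul_mul_star,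
      diagonal_mul_diagonal, trace_diagonal] at htr_sq
    simp only [Function.comp_apply, ← sq] at htr_sq
    exact_mod_cast htr_sq
  obtain ⟨j, hj⟩ := exists_eq_single_of_sum_eq_one_of_sum_sq_eq_one hQ.eigenvalues_nonneg hsum hsq
  set U : Matrix n n 𝕜 := (hQ.1.eigenvectorUnitary : Matrix n n 𝕜)
  set e : n → 𝕜 := Pi.single j 1
  have hD : diagonal (RCLike.ofReal ∘ Pi.single j (1 : ℝ)) = vecMulVec e (star e) := by
    ext a b
    by_cases ha : a = j <;> by_cases hb : b = j <;>
      simp [e, diagonal_apply, vecMulVec_apply, ha, hb, Ne.symm]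
  refine ⟨U *ᵥ e, ?_, ?_⟩
  · rw [star_mulVec, dotProduct_mulVec, vecMul_vecMul, ← star_eq_conjTranspose,
      Unitary.coe_star_mul_self, vecMul_one]
    simp [e]
  · rw [hspec, hj, Unitary.conjStarAlgAut_apply, hD, mul_vecMulVec, vecMulVec_mul, star_mulVec]
    rfl

/-- A completely positive, trace-preserving, Hilbert-Schmidt-isometric map
preserves pure states. -/
theorem stmt_12 {n m : ℕ}
    (Φ : Matrix (Fin n) (Fin n) ℂ →ₗ[ℂ] Matrix (Fin m) (Fin m) ℂ)
    (hCP : IsCompletelyPositive Φ)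
    (htr : ∀ a, (Φ a).trace = a.trace)
    (hiso : ∀ a b, hsInner (Φ a) (Φ b) = hsInner a b) :
    ∀ ψ : Fin n → ℂ, star ψ ⬝ᵥ ψ = 1 →
      ∃ φ : Fin m → ℂ, star φ ⬝ᵥ φ = 1 ∧
        Φ (vecMulVec ψ (star ψ)) = vecMulVec φ (star φ) := by
  intro ψ hψ
  set P := vecMulVec ψ (star ψ)
  have hP : P.PosSemidef := posSemidef_vecMulVec_self_star ψ
  have htrP : P.trace = 1 := by rw [trace_vecMulVec, dotProduct_comm, hψ]
  have hPP : P * P = P := by rw [vecMulVec_mul_vecMulVec, hψ, one_smul]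
  have hQ : (Φ P).PosSemidef := hCP.posSemidef_map hP
  refine hQ.exists_eq_vecMulVec_of_trace_eq_one ((htr P).trans htrP) ?_
  simpa only [hsInner, hQ.1.eq, hP.1.eq, hPP, htrP] using hiso P P
end
end

section
/- Fix n ≥ 1, let (α i)_{i : Fin (n*n)} be an orthonormal basis of Mₙ(ℂ) for the Hilbert–Schmidt inner product, let δ : Mₙ(ℂ) → M_{n·n}(ℂ) be the unique linear map with δ(α i) = (α i) ⊗ₖ (α i), and let δ† be its Hilbert–Schmidt adjoint. If there is a subset A ⊆ Fin (n*n) with ∑_{i ∈ A} α i = 1 (the identity matrix of Mₙ(ℂ)), then δ†(1) = 1, where the argument 1 is the identity matrix of M_{n·n}(ℂ). -/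
open Matrix Kronecker ComplexOrder

noncomputable section

/-!
Pairing with the basis, `⟨α i, δ† 1⟩ = ⟨α i ⊗ₖ α i, 1⟩ = conj (Tr (α i))²`, while
`⟨α i, 1⟩ = conj (Tr (α i))`. Orthonormality and `∑_{i ∈ A} α i = 1` give
`conj (Tr (α i)) = ⟨α i, 1⟩ = [i ∈ A] ∈ {0, 1}`, which equals its own square. So `δ† 1` and `1`
have the same inner products with a spanning family, hence coincide.
-/

section HilbertSchmidt

variable {m : Type*} [Fintype m]

theorem star_hsInner (a b : Matrix m m ℂ) : star (hsInner a b) = hsInner b a := by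
  rw [hsInner, hsInner, ← trace_conjTranspose, conjTranspose_mul, conjTranspose_conjTranspose]

theorem hsInner_sub_right (a b c : Matrix m m ℂ) :
    hsInner a (b - c) = hsInner a b - hsInner a c := by
  rw [hsInner, hsInner, hsInner, Matrix.mul_sub, trace_sub]

theorem hsInner_sum_right {ι : Type*} (a : Matrix m m ℂ) (s : Finset ι) (b : ι → Matrix m m ℂ) :
    hsInner a (∑ i ∈ s, b i) = ∑ i ∈ s, hsInner a (b i) := by
  rw [hsInner, Matrix.mul_sum, trace_sum]
  rfl

theorem hsInner_one_right [DecidableEq m] (a : Matrix m m ℂ) : hsInner a 1 = star a.trace := by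
  rw [hsInner, Matrix.mul_one, trace_conjTranspose]

theorem hsInner_kronecker_self_one [DecidableEq m] (a : Matrix m m ℂ) :
    hsInner (a ⊗ₖ a) 1 = hsInner a 1 ^ 2 := by
  rw [hsInner_one_right, hsInner_one_right, trace_kronecker, star_mul', sq]

theorem eq_of_forall_hsInner_eq {ι : Type*} {v : ι → Matrix m m ℂ}
    (hv : Submodule.span ℂ (Set.range v) = ⊤) {a b : Matrix m m ℂ}
    (h : ∀ i, hsInner (v i) a = hsInner (v i) b) : a = b := by
  set c := a - b
  let L : Matrix m m ℂ →ₗ[ℂ] ℂ := (traceLinearMap m ℂ ℂ).comp (LinearMap.mulLeft ℂ cᴴ)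
  have hL : L = 0 := LinearMap.ext_on_range hv fun i => by
    change hsInner c (v i) = 0
    rw [← star_hsInner, hsInner_sub_right, h i, sub_self, star_zero]
  have hcc : (cᴴ * c).trace = 0 := LinearMap.congr_fun hL c
  exact sub_eq_zero.mp (trace_conjTranspose_mul_self_eq_zero_iff.mp hcc)

theorem hsInner_one_of_sum_eq_one [DecidableEq m] {ι : Type*} [DecidableEq ι]
    {α : ι → Matrix m m ℂ} (horth : ∀ i j, hsInner (α i) (α j) = if i = j then 1 else 0)
    {A : Finset ι} (hA : ∑ i ∈ A, α i = 1) (i : ι) :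
    hsInner (α i) 1 = if i ∈ A then 1 else 0 := by
  simp only [← hA, hsInner_sum_right, horth, Finset.sum_ite_eq]

end HilbertSchmidt

theorem stmt_14_general (n : ℕ)
    (α : Fin (n * n) → Matrix (Fin n) (Fin n) ℂ)
    (horth : ∀ i j, hsInner (α i) (α j) = if i = j then 1 else 0)
    (hspan : Submodule.span ℂ (Set.range α) = ⊤)
    (δ : Matrix (Fin n) (Fin n) ℂ →ₗ[ℂ] Matrix (Fin n × Fin n) (Fin n × Fin n) ℂ)
    (hδ : ∀ i, δ (α i) = α i ⊗ₖ α i)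
    (δd : Matrix (Fin n × Fin n) (Fin n × Fin n) ℂ →ₗ[ℂ] Matrix (Fin n) (Fin n) ℂ)
    (hadj : ∀ a b, hsInner (δ a) b = hsInner a (δd b))
    (A : Finset (Fin (n * n))) (hA : ∑ i ∈ A, α i = 1) :
    δd 1 = 1 := by
  refine eq_of_forall_hsInner_eq hspan fun i => ?_
  rw [← hadj, hδ, hsInner_kronecker_self_one, hsInner_one_of_sum_eq_one horth hA]
  split_ifs <;> norm_num

/-- If some subset of the basis elements sums to the identity, then δ† is unital. -/
theorem stmt_14 (n : ℕ) (hn : 1 ≤ n)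
    (α : Fin (n * n) → Matrix (Fin n) (Fin n) ℂ)
    (horth : ∀ i j, hsInner (α i) (α j) = if i = j then 1 else 0)
    (hspan : Submodule.span ℂ (Set.range α) = ⊤)
    (δ : Matrix (Fin n) (Fin n) ℂ →ₗ[ℂ] Matrix (Fin n × Fin n) (Fin n × Fin n) ℂ)
    (hδ : ∀ i, δ (α i) = α i ⊗ₖ α i)
    (δd : Matrix (Fin n × Fin n) (Fin n × Fin n) ℂ →ₗ[ℂ] Matrix (Fin n) (Fin n) ℂ)
    (hadj : ∀ a b, hsInner (δ a) b = hsInner a (δd b))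
    (A : Finset (Fin (n * n))) (hA : ∑ i ∈ A, α i = 1) :
    δd 1 = 1 :=
  stmt_14_general n α horth hspan δ hδ δd hadj A hA
end
end

section
/- Fix n ≥ 1, let (α i)_{i : Fin (n*n)} be an orthonormal basis of Mₙ(ℂ) for the Hilbert–Schmidt inner product, and let δ : Mₙ(ℂ) → M_{n·n}(ℂ) be the unique linear map with δ(α i) = (α i) ⊗ₖ (α i). If the basis is canonical — there exists an orthonormal basis (e i) of ℂⁿ with {α k : k} = {(e i)(e j)ᴴ : i, j} as sets of matrices — then δ(1) is idempotent: δ(1)·δ(1) = δ(1). -/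
/-!
Writing `Eᵢ = eᵢ eᵢᴴ`, orthonormality of `(e i)` makes the `Eᵢ` orthogonal idempotents summing
to `1`. Each `Eᵢ` is one of the basis matrices, so `δ 1 = ∑ᵢ Eᵢ ⊗ₖ Eᵢ`; since the Kronecker product
is multiplicative, the `Eᵢ ⊗ₖ Eᵢ` are again orthogonal idempotents, and so is their sum.
-/

open Matrix Kronecker ComplexOrder

noncomputable section

namespace Matrix

variable {m R : Type*} [Fintype m] [DecidableEq m]

theorem orthogonalIdempotents_vecMulVec_star [Semiring R] [StarRing R] {e : m → m → R}
    (he : ∀ i j, star (e i) ⬝ᵥ e j = if i = j then 1 else 0) :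
    OrthogonalIdempotents fun i => vecMulVec (e i) (star (e i)) :=
  OrthogonalIdempotents.iff_mul_eq.mpr fun i j => by
    rw [vecMulVec_mul_vecMulVec, he]
    split_ifs with h <;> simp [h]

theorem sum_vecMulVec_star_eq_one [CommRing R] [StarRing R] {e : m → m → R}
    (he : ∀ i j, star (e i) ⬝ᵥ e j = if i = j then 1 else 0) :
    ∑ i, vecMulVec (e i) (star (e i)) = 1 := by
  -- `he` says the matrix with columns `e i` is an isometry; being square, it is unitary.
  have hV : (of e)ᵀᴴ * (of e)ᵀ = 1 := by
    ext i j
    simpa [mul_apply, dotProduct, one_apply] using he i j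
  rw [← mul_eq_one_comm.mp hV]
  ext a b
  simp [mul_apply, Matrix.sum_apply, vecMulVec_apply]

theorem _root_.OrthogonalIdempotents.kronecker_self [CommSemiring R] {ι : Type*}
    {P : ι → Matrix m m R} (hP : OrthogonalIdempotents P) :
    OrthogonalIdempotents fun i => P i ⊗ₖ P i where
  idem i := by
    rw [IsIdempotentElem, ← mul_kronecker_mul, (hP.idem i).eq]
  ortho i j hij := by
    simp only [← mul_kronecker_mul, hP.ortho hij, zero_kronecker]

end Matrix

theorem stmt_17_general (n : ℕ)
    (α : Fin (n * n) → Matrix (Fin n) (Fin n) ℂ)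
    (δ : Matrix (Fin n) (Fin n) ℂ →ₗ[ℂ] Matrix (Fin n × Fin n) (Fin n × Fin n) ℂ)
    (hδ : ∀ i, δ (α i) = α i ⊗ₖ α i)
    (e : Fin n → Fin n → ℂ)
    (he : ∀ i j, star (e i) ⬝ᵥ e j = if i = j then 1 else 0)
    (hcanon : Set.range α =
      Set.range fun p : Fin n × Fin n => vecMulVec (e p.1) (star (e p.2))) :
    δ 1 * δ 1 = δ 1 := by
  have hδE : ∀ i, δ (vecMulVec (e i) (star (e i))) =
      vecMulVec (e i) (star (e i)) ⊗ₖ vecMulVec (e i) (star (e i)) := by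
    intro i
    obtain ⟨k, hk⟩ : vecMulVec (e i) (star (e i)) ∈ Set.range α := hcanon ▸ ⟨(i, i), rfl⟩
    rw [← hk, hδ]
  have hδ1 : δ 1 = ∑ i, vecMulVec (e i) (star (e i)) ⊗ₖ vecMulVec (e i) (star (e i)) := by
    simp only [← sum_vecMulVec_star_eq_one he, map_sum, hδE]
  rw [hδ1]
  exact (orthogonalIdempotents_vecMulVec_star he).kronecker_self.isIdempotentElem_sum.eq

/-- If the basis is canonical, built from an orthonormal basis (e i) of ℂⁿ, then
δ(1) is idempotent. -/
theorem stmt_17 (n : ℕ) (hn : 1 ≤ n)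
    (α : Fin (n * n) → Matrix (Fin n) (Fin n) ℂ)
    (horth : ∀ i j, hsInner (α i) (α j) = if i = j then 1 else 0)
    (hspan : Submodule.span ℂ (Set.range α) = ⊤)
    (δ : Matrix (Fin n) (Fin n) ℂ →ₗ[ℂ] Matrix (Fin n × Fin n) (Fin n × Fin n) ℂ)
    (hδ : ∀ i, δ (α i) = α i ⊗ₖ α i)
    (e : Fin n → Fin n → ℂ)
    (he : ∀ i j, star (e i) ⬝ᵥ e j = if i = j then 1 else 0)
    (hcanon : Set.range α =
      Set.range fun p : Fin n × Fin n => vecMulVec (e p.1) (star (e p.2))) :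
    δ 1 * δ 1 = δ 1 :=
  stmt_17_general n α δ hδ e he hcanon
end
end
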